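/- Let p, p' be probability density functions on a measurable space H satisfying p(h) ≤ e^ε · p'(h) for all h (ε ≥ 0), and let ℓ : H → ℝ be measurable with 0 ≤ ℓ(h) ≤ L for all h. Then |∫ ℓ(h) p(h) dh − ∫ ℓ(h) p'(h) dh| ≤ L(1 − e^{−ε}). -/

import Mathlib

/-!
Put `c = e^{-ε}`, so that `c p ≤ p'`. For a loss `0 ≤ f ≤ M` this gives `c ∫ f p ≤ ∫ f p'`,
hence `∫ f p - ∫ f p' ≤ (1 - c) ∫ f p ≤ (1 - c) M`. The reverse inequality is the same bound
applied to the complementary loss `L - ℓ`, whose expectations are `L - ∫ ℓ p` and `L - ∫ ℓ p'`.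
-/

open MeasureTheory Real

section Densities

variable {H : Type*} [MeasurableSpace H] {μ : Measure H} {p p' f : H → ℝ} {c M : ℝ}

theorem integral_mul_density_le (hp : ∀ h, 0 ≤ p h) (hpi : Integrable p μ)
    (hp1 : ∫ h, p h ∂μ = 1) (hfM : ∀ h, f h ≤ M) (hfi : Integrable (fun h => f h * p h) μ) :
    ∫ h, f h * p h ∂μ ≤ M :=
  calc ∫ h, f h * p h ∂μ ≤ ∫ h, M * p h ∂μ :=
        integral_mono hfi (hpi.const_mul M) fun h => mul_le_mul_of_nonneg_right (hfM h) (hp h)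
    _ = M := by rw [integral_const_mul, hp1, mul_one]

theorem const_mul_integral_mul_le (hcp : ∀ h, c * p h ≤ p' h) (hf0 : ∀ h, 0 ≤ f h)
    (hfi : Integrable (fun h => f h * p h) μ) (hfi' : Integrable (fun h => f h * p' h) μ) :
    c * ∫ h, f h * p h ∂μ ≤ ∫ h, f h * p' h ∂μ := by
  rw [← integral_const_mul]
  refine integral_mono (hfi.const_mul c) hfi' fun h => ?_
  calc c * (f h * p h) = f h * (c * p h) := by ring
    _ ≤ f h * p' h := mul_le_mul_of_nonneg_left (hcp h) (hf0 h)

theorem integral_mul_sub_integral_mul_le (hc : c ≤ 1) (hcp : ∀ h, c * p h ≤ p' h)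
    (hp : ∀ h, 0 ≤ p h) (hpi : Integrable p μ) (hp1 : ∫ h, p h ∂μ = 1)
    (hf0 : ∀ h, 0 ≤ f h) (hfM : ∀ h, f h ≤ M)
    (hfi : Integrable (fun h => f h * p h) μ) (hfi' : Integrable (fun h => f h * p' h) μ) :
    (∫ h, f h * p h ∂μ) - ∫ h, f h * p' h ∂μ ≤ M * (1 - c) := by
  have hle := integral_mul_density_le hp hpi hp1 hfM hfi
  have hcomp := const_mul_integral_mul_le hcp hf0 hfi hfi'
  nlinarith

theorem integral_const_sub_mul_density (hpi : Integrable p μ) (hp1 : ∫ h, p h ∂μ = 1)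
    (hfi : Integrable (fun h => f h * p h) μ) :
    ∫ h, (M - f h) * p h ∂μ = M - ∫ h, f h * p h ∂μ := by
  simp only [sub_mul]
  rw [integral_sub (hpi.const_mul M) hfi, integral_const_mul, hp1, mul_one]

theorem MeasureTheory.Integrable.const_sub_mul (hfi : Integrable (fun h => f h * p h) μ)
    (hpi : Integrable p μ) : Integrable (fun h => (M - f h) * p h) μ :=
  ((hpi.const_mul M).sub hfi).congr (.of_forall fun h => (sub_mul M (f h) (p h)).symm)

end Densities

theorem privacy_implies_stability_general
    {H : Type*} [MeasurableSpace H] (μ : Measure H)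
    (p p' ℓ : H → ℝ) (ε L : ℝ) (hε : 0 ≤ ε)
    (hp : ∀ h, 0 ≤ p h)
    (hpi : Integrable p μ) (hp'i : Integrable p' μ)
    (hp1 : ∫ h, p h ∂μ = 1) (hp'1 : ∫ h, p' h ∂μ = 1)
    (hdp : ∀ h, p h ≤ Real.exp ε * p' h)
    (hℓ0 : ∀ h, 0 ≤ ℓ h) (hℓL : ∀ h, ℓ h ≤ L)
    (hint : Integrable (fun h => ℓ h * p h) μ)
    (hint' : Integrable (fun h => ℓ h * p' h) μ) :
    |(∫ h, ℓ h * p h ∂μ) - ∫ h, ℓ h * p' h ∂μ| ≤ L * (1 - Real.exp (-ε)) := by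
  have hc : Real.exp (-ε) ≤ 1 := exp_le_one_iff.mpr (neg_nonpos.mpr hε)
  have hcp : ∀ h, Real.exp (-ε) * p h ≤ p' h := fun h => by
    simpa [exp_neg] using (inv_mul_le_iff₀ (exp_pos ε)).mpr (hdp h)
  have hupper := integral_mul_sub_integral_mul_le hc hcp hp hpi hp1 hℓ0 hℓL hint hint'
  have hlower := integral_mul_sub_integral_mul_le (f := fun h => L - ℓ h) (M := L) hc hcp hp hpi
    hp1 (fun h => sub_nonneg.mpr (hℓL h)) (fun h => sub_le_self L (hℓ0 h))
    (hint.const_sub_mul hpi) (hint'.const_sub_mul hp'i)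
  rw [integral_const_sub_mul_density hpi hp1 hint,
    integral_const_sub_mul_density hp'i hp'1 hint'] at hlower
  rw [abs_sub_le_iff]
  constructor <;> linarith

/-- Privacy implies stability: if densities `p, p'` satisfy `p ≤ e^ε p'` pointwise
and the loss `ℓ` takes values in `[0, L]`, then the two expected losses differ by
at most `L (1 - e^{-ε})`. -/
theorem privacy_implies_stability
    {H : Type*} [MeasurableSpace H] (μ : Measure H)
    (p p' ℓ : H → ℝ) (ε L : ℝ) (hε : 0 ≤ ε)
    (hp : ∀ h, 0 ≤ p h) (hp' : ∀ h, 0 ≤ p' h)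
    (hpi : Integrable p μ) (hp'i : Integrable p' μ)
    (hp1 : ∫ h, p h ∂μ = 1) (hp'1 : ∫ h, p' h ∂μ = 1)
    (hdp : ∀ h, p h ≤ Real.exp ε * p' h)
    (hℓm : Measurable ℓ) (hℓ0 : ∀ h, 0 ≤ ℓ h) (hℓL : ∀ h, ℓ h ≤ L)
    (hint : Integrable (fun h => ℓ h * p h) μ)
    (hint' : Integrable (fun h => ℓ h * p' h) μ) :
    |(∫ h, ℓ h * p h ∂μ) - ∫ h, ℓ h * p' h ∂μ| ≤ L * (1 - Real.exp (-ε)) :=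
  privacy_implies_stability_general μ p p' ℓ ε L hε hp hpi hp'i hp1 hp'1 hdp hℓ0 hℓL hint hint'
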